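/- arXiv:2511.12016 — 3 statements merged into one kernel-verified Lean document; each statement's English description precedes it below -/
import Mathlib

section
/- Let n be a positive integer and let S_1,...,S_n, S be exchangeable real-valued random variables with almost surely no ties. Then for every α ∈ [0,1], the conformal p-value p = (1 + #{i : S ≤ S_i})/(n+1) satisfies P(p ≤ α) ≤ α. -/
open MeasureTheory
open scoped ENNReal

/-- The conformal p-value: `T i` for `i < n` are the calibration scores and
`T (Fin.last n)` is the test score. -/
noncomputable def conformalPValue (n : ℕ) (T : Fin (n + 1) → ℝ) : ℝ :=
  (1 + (Finset.univ.filter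
      (fun i : Fin n => T (Fin.last n) ≤ T i.castSucc)).card) / (n + 1)

namespace ConformalAux

variable {n : ℕ}

/-- Rank of coordinate `j` from the top: number of coordinates `i` with `x j ≤ x i`. -/
noncomputable def rnk (x : Fin (n + 1) → ℝ) (j : Fin (n + 1)) : ℕ :=
  (Finset.univ.filter (fun i => x j ≤ x i)).card

lemma one_le_rnk (x : Fin (n + 1) → ℝ) (j : Fin (n + 1)) : 1 ≤ rnk x j :=
  Finset.card_pos.2 ⟨j, by simp [rnk]⟩

lemma rnk_le (x : Fin (n + 1) → ℝ) (j : Fin (n + 1)) : rnk x j ≤ n + 1 := by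
  simpa [rnk] using Finset.card_filter_le (Finset.univ : Finset (Fin (n+1))) _

lemma rnk_comp_perm (x : Fin (n + 1) → ℝ) (σ : Equiv.Perm (Fin (n + 1)))
    (j : Fin (n + 1)) : rnk (fun i => x (σ i)) j = rnk x (σ j) := by
  unfold rnk
  apply Finset.card_bij (fun i _ => σ i)
  · intro a ha
    simp only [Finset.mem_filter, Finset.mem_univ, true_and] at ha ⊢
    exact ha
  · intro a _ b _ h
    exact σ.injective h
  · intro b hb
    refine ⟨σ.symm b, ?_, by simp⟩
    simp only [Finset.mem_filter, Finset.mem_univ, true_and] at hb ⊢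
    simpa using hb

lemma rnk_lt_of_lt {x : Fin (n + 1) → ℝ} {j j' : Fin (n + 1)} (h : x j < x j') :
    rnk x j' < rnk x j := by
  apply Finset.card_lt_card
  constructor
  · intro i hi
    simp only [Finset.mem_filter, Finset.mem_univ, true_and] at hi ⊢
    exact h.le.trans hi
  · intro hsub
    have hj : j ∈ Finset.univ.filter (fun i => x j ≤ x i) :=
      Finset.mem_filter.2 ⟨Finset.mem_univ j, le_rfl⟩
    have := hsub hj
    simp only [Finset.mem_filter, Finset.mem_univ, true_and] at this
    exact absurd this (not_le.2 h)

lemma rnk_inj {x : Fin (n + 1) → ℝ} (hx : ∀ i j : Fin (n + 1), i ≠ j → x i ≠ x j)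
    {j j' : Fin (n + 1)} (h : rnk x j = rnk x j') : j = j' := by
  by_contra hne
  rcases lt_or_gt_of_ne (hx j j' hne) with hlt | hgt
  · exact absurd h (rnk_lt_of_lt hlt).ne'
  · exact absurd h (rnk_lt_of_lt hgt).ne

lemma measurable_rnk (j : Fin (n + 1)) :
    Measurable (fun x : Fin (n + 1) → ℝ => rnk x j) := by
  have : (fun x : Fin (n + 1) → ℝ => rnk x j)
      = fun x => ∑ i : Fin (n + 1), if x j ≤ x i then 1 else 0 := by
    funext x; rw [rnk, Finset.card_filter]
  rw [this]
  exact Finset.measurable_sum _ fun i _ =>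
    Measurable.ite (measurableSet_le (measurable_pi_apply j) (measurable_pi_apply i))
      measurable_const measurable_const

lemma conformalPValue_eq (x : Fin (n + 1) → ℝ) :
    (1 + ((Finset.univ.filter
      (fun i : Fin n => x (Fin.last n) ≤ x i.castSucc)).card : ℝ)) / (n + 1)
      = (rnk x (Fin.last n) : ℝ) / (n + 1) := by
  congr 1
  have : rnk x (Fin.last n)
      = 1 + (Finset.univ.filter (fun i : Fin n => x (Fin.last n) ≤ x i.castSucc)).card := by
    unfold rnk
    rw [Fin.univ_castSuccEmb, Finset.filter_cons, if_pos le_rfl,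
      Finset.card_cons, Finset.filter_map, Finset.card_map, add_comm]
    rfl
  rw [this]
  push_cast
  ring

end ConformalAux

lemma conformalPValue_eq_rnk_div {n : ℕ} (x : Fin (n + 1) → ℝ) :
    conformalPValue n x = (ConformalAux.rnk x (Fin.last n) : ℝ) / (n + 1) :=
  ConformalAux.conformalPValue_eq x


/-- validity (super-uniformity) of the conformal p-value for
exchangeable scores with almost surely no ties. -/
theorem conformal_p_value_superuniform
    {Ω : Type*} [MeasurableSpace Ω] (P : Measure Ω) [IsProbabilityMeasure P]
    (n : ℕ) (hn : 1 ≤ n) (T : Fin (n + 1) → Ω → ℝ)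
    (hmeas : ∀ i, Measurable (T i))
    (hexch : ∀ σ : Equiv.Perm (Fin (n + 1)),
      P.map (fun ω => fun i => T (σ i) ω) = P.map (fun ω => fun i => T i ω))
    (hties : ∀ᵐ ω ∂P, ∀ i j : Fin (n + 1), i ≠ j → T i ω ≠ T j ω)
    (α : ℝ) (hα : α ∈ Set.Icc (0 : ℝ) 1) :
    P {ω | conformalPValue n (fun i => T i ω) ≤ α} ≤ ENNReal.ofReal α := by

  classical
  obtain ⟨hα0, hα1⟩ := hα
  open ConformalAux in
  set X : Ω → (Fin (n + 1) → ℝ) := fun ω i => T i ω with hX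
  have hXmeas : Measurable X := measurable_pi_lambda _ hmeas
  set A : Fin (n + 1) → ℕ → Set Ω :=
    fun j k => {ω | ConformalAux.rnk (X ω) j = k} with hA
  have hAmeas : ∀ j k, MeasurableSet (A j k) := fun j k =>
    ((ConformalAux.measurable_rnk j).comp hXmeas) (measurableSet_singleton k)
  -- Step A: exchangeability
  have hAeq : ∀ j k, P (A j k) = P (A (Fin.last n) k) := by
    intro j k
    set σ : Equiv.Perm (Fin (n + 1)) := Equiv.swap (Fin.last n) j with hσdef
    have hσ := hexch σ
    have hYmeas : Measurable (fun ω => fun i => T (σ i) ω) :=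
      measurable_pi_lambda _ fun i => hmeas (σ i)
    have hS : MeasurableSet {x : Fin (n + 1) → ℝ | ConformalAux.rnk x (Fin.last n) = k} :=
      (ConformalAux.measurable_rnk (Fin.last n)) (measurableSet_singleton k)
    have h1 := Measure.map_apply (μ := P) hYmeas hS
    have h2 := Measure.map_apply (μ := P) hXmeas hS
    rw [hσ] at h1
    have hpre : (fun ω => fun i => T (σ i) ω) ⁻¹'
        {x : Fin (n + 1) → ℝ | ConformalAux.rnk x (Fin.last n) = k} = A j k := by
      ext ω
      simp only [Set.mem_preimage, Set.mem_setOf_eq, hA]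
      rw [show (fun i => T (σ i) ω) = (fun i => X ω (σ i)) from rfl,
        ConformalAux.rnk_comp_perm (X ω) σ (Fin.last n), hσdef, Equiv.swap_apply_left]
    rw [hpre] at h1
    have hpre2 : X ⁻¹' {x : Fin (n + 1) → ℝ | ConformalAux.rnk x (Fin.last n) = k}
        = A (Fin.last n) k := rfl
    rw [hpre2] at h2
    rw [← h1, ← h2]
  -- Step B: a.e. disjointness and uniform bound
  have hdisj : ∀ k, Pairwise fun j j' => MeasureTheory.AEDisjoint P (A j k) (A j' k) := by
    intro k j j' hne
    refine measure_mono_null ?_ (ae_iff.mp hties)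
    intro ω hω
    simp only [Set.mem_inter_iff, hA, Set.mem_setOf_eq] at hω
    simp only [Set.mem_setOf_eq]
    intro hno
    exact hne (ConformalAux.rnk_inj (x := X ω) hno (hω.1.trans hω.2.symm))
  have hbound : ∀ k, P (A (Fin.last n) k) ≤ (((n + 1 : ℕ) : ℝ≥0∞))⁻¹ := by
    intro k
    have hU : P (⋃ j, A j k) = ∑' j, P (A j k) :=
      measure_iUnion₀ (hdisj k) fun j => (hAmeas j k).nullMeasurableSet
    have hsum : ∑ j : Fin (n + 1), P (A j k) ≤ 1 := by
      rw [← tsum_fintype (L := .unconditional _), ← hU]; exact prob_le_one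
    have hmul : ((n + 1 : ℕ) : ℝ≥0∞) * P (A (Fin.last n) k) ≤ 1 := by
      calc ((n + 1 : ℕ) : ℝ≥0∞) * P (A (Fin.last n) k)
          = ∑ j : Fin (n + 1), P (A j k) := by
            rw [Finset.sum_congr rfl fun j _ => hAeq j k, Finset.sum_const,
              Finset.card_univ, Fintype.card_fin, nsmul_eq_mul]
        _ ≤ 1 := hsum
    rw [ENNReal.le_inv_iff_mul_le, mul_comm]
    exact hmul
  -- Step C: the event is contained in a union of rank events
  set K : Finset ℕ :=
    (Finset.Icc 1 (n + 1)).filter (fun k => (k : ℝ) ≤ α * (n + 1)) with hK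
  have hEsub : {ω | conformalPValue n (fun i => T i ω) ≤ α}
      ⊆ ⋃ k ∈ K, A (Fin.last n) k := by
    intro ω hω
    simp only [Set.mem_setOf_eq] at hω
    rw [conformalPValue_eq_rnk_div] at hω
    set r := ConformalAux.rnk (fun i => T i ω) (Fin.last n) with hr
    have hr1 : 1 ≤ r := ConformalAux.one_le_rnk _ _
    have hr2 : r ≤ n + 1 := ConformalAux.rnk_le _ _
    have hrα : (r : ℝ) ≤ α * (n + 1) := by
      rw [div_le_iff₀ (by positivity)] at hω
      exact hω
    have hrK : r ∈ K := by
      rw [hK, Finset.mem_filter, Finset.mem_Icc]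
      exact ⟨⟨hr1, hr2⟩, hrα⟩
    exact Set.mem_biUnion hrK rfl
  have hcard : (K.card : ℝ) ≤ α * (n + 1) := by
    have hsub : K ⊆ Finset.Icc 1 (Nat.floor (α * (n + 1))) := by
      intro k hk
      rw [hK, Finset.mem_filter, Finset.mem_Icc] at hk
      rw [Finset.mem_Icc]
      exact ⟨hk.1.1, Nat.le_floor hk.2⟩
    have h1 : K.card ≤ Nat.floor (α * (n + 1)) := by
      have := Finset.card_le_card hsub
      simpa [Nat.card_Icc] using this
    calc (K.card : ℝ) ≤ (Nat.floor (α * (n + 1)) : ℝ) := by exact_mod_cast h1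
      _ ≤ α * (n + 1) := Nat.floor_le (by positivity)
  -- Final calculation
  calc P {ω | conformalPValue n (fun i => T i ω) ≤ α}
      ≤ P (⋃ k ∈ K, A (Fin.last n) k) := measure_mono hEsub
    _ ≤ ∑ k ∈ K, P (A (Fin.last n) k) := measure_biUnion_finset_le K _
    _ ≤ ∑ k ∈ K, (((n + 1 : ℕ) : ℝ≥0∞))⁻¹ := Finset.sum_le_sum fun k _ => hbound k
    _ = (K.card : ℝ≥0∞) * (((n + 1 : ℕ) : ℝ≥0∞))⁻¹ := by
        rw [Finset.sum_const, nsmul_eq_mul]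
    _ ≤ ENNReal.ofReal (α * (n + 1)) * (((n + 1 : ℕ) : ℝ≥0∞))⁻¹ := by
        refine mul_le_mul_left ?_ _
        rw [← ENNReal.ofReal_natCast]
        exact ENNReal.ofReal_le_ofReal hcard
    _ = ENNReal.ofReal α := by
        rw [ENNReal.ofReal_mul hα0,
          show ((n : ℝ) + 1) = ((n + 1 : ℕ) : ℝ) by push_cast; ring,
          ENNReal.ofReal_natCast, mul_assoc, ENNReal.mul_inv_cancel
            (by exact_mod_cast Nat.succ_ne_zero n) (ENNReal.natCast_ne_top _), mul_one]
end

section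
/- There exists a probability space and random variables V_1, V_2, R_1, R_2 (with V_k ≤ R_k) such that the global FDR, E[(V_1+V_2)/max(1, R_1+R_2)], strictly exceeds a level α while the SCW-FDR, E[(V_1+V_2)/(max(1,R_1)+max(1,R_2))], is at most α. Concretely: take R_1 = 1, R_2 = 0, V_2 = 0 deterministically, and V_1 a Bernoulli(β) variable with β = 0.15, α = 0.10; then global FDR = 0.15 > 0.10 while SCW-FDR = 0.075 ≤ 0.10. -/
open MeasureTheory

noncomputable def Pber : Measure Bool :=
  (ENNReal.ofReal 0.15) • Measure.dirac true + (ENNReal.ofReal 0.85) • Measure.dirac false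

instance : IsProbabilityMeasure Pber := by
  constructor
  simp [Pber]
  rw [← ENNReal.ofReal_add (by norm_num) (by norm_num)]
  norm_num

instance (r : ℝ) (b : Bool) :
    IsFiniteMeasure ((ENNReal.ofReal r) • (Measure.dirac b : Measure Bool)) := by
  constructor
  simp [lt_top_iff_ne_top, ENNReal.ofReal_ne_top]

/-- SCW-FDR control does not imply global FDR control. There is a
probability space and random counts V_k ≤ R_k (K = 2) with global FDR
= 0.15 > α = 0.10 while SCW-FDR = 0.075 ≤ 0.10. -/
theorem scw_fdr_control_not_imply_global :
    ∃ (Ω : Type) (_ : MeasurableSpace Ω) (P : Measure Ω)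
      (_ : IsProbabilityMeasure P) (V₁ V₂ R₁ R₂ : Ω → ℕ),
      Measurable V₁ ∧ Measurable V₂ ∧ Measurable R₁ ∧ Measurable R₂
      ∧ (∀ ω, V₁ ω ≤ R₁ ω) ∧ (∀ ω, V₂ ω ≤ R₂ ω)
      ∧ (∀ ω, R₁ ω = 1) ∧ (∀ ω, R₂ ω = 0) ∧ (∀ ω, V₂ ω = 0)
      ∧ P {ω | V₁ ω = 1} = ENNReal.ofReal 0.15
      ∧ (∫ ω, ((V₁ ω + V₂ ω : ℕ) : ℝ) / ((max 1 (R₁ ω + R₂ ω) : ℕ) : ℝ) ∂P)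
          = 0.15
      ∧ (0.10 : ℝ) < 0.15
      ∧ (∫ ω, ((V₁ ω + V₂ ω : ℕ) : ℝ)
            / ((max 1 (R₁ ω) + max 1 (R₂ ω) : ℕ) : ℝ) ∂P) = 0.075
      ∧ (0.075 : ℝ) ≤ 0.10 := by
  refine ⟨Bool, inferInstance, Pber, inferInstance,
    (fun ω => if ω then 1 else 0), (fun _ => 0), (fun _ => 1), (fun _ => 0),
    (by measurability), measurable_const, measurable_const, measurable_const,
    (by intro ω; cases ω <;> simp), (by simp), (by simp), (by simp), (by simp),
    ?_, ?_, by norm_num, ?_, by norm_num⟩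
  · have : {ω : Bool | (if ω then 1 else 0) = 1} = {true} := by
      ext ω; cases ω <;> simp
    rw [this]
    simp [Pber]
  · rw [Pber, integral_add_measure .of_finite .of_finite,
      integral_smul_measure, integral_smul_measure, integral_dirac, integral_dirac]
    norm_num
  · rw [Pber, integral_add_measure .of_finite .of_finite,
      integral_smul_measure, integral_smul_measure, integral_dirac, integral_dirac]
    norm_num
end

section
/- Let p_1,...,p_m be independent random variables in [0,1], with a subset N ⊆ {1,...,m} of nulls each satisfying P(p_i ≤ t) ≤ t for all t. Then the Benjamini–Hochberg procedure at level α has FDR at most α|N|/m ≤ α: E[|R ∩ N| / max(1,|R|)] ≤ α, where R is the BH rejection set. -/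
open MeasureTheory ProbabilityTheory

/-- BH step-up index: the largest k ≤ m such that at least k of the p-values
are ≤ (k/m)α (equivalently the k-th order statistic is ≤ (k/m)α). -/
noncomputable def bhIndex {Ω : Type*} (m : ℕ) (α : ℝ) (p : Fin m → Ω → ℝ)
    (ω : Ω) : ℕ :=
  sSup {k : ℕ | k ≤ m ∧
    k ≤ (Finset.univ.filter (fun i => p i ω ≤ ((k : ℝ) / m) * α)).card}

/-- BH rejection set at level α. -/
noncomputable def bhRejectionSet {Ω : Type*} (m : ℕ) (α : ℝ)
    (p : Fin m → Ω → ℝ) (ω : Ω) : Finset (Fin m) :=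
  Finset.univ.filter (fun i => p i ω ≤ ((bhIndex m α p ω : ℝ) / m) * α)

section aux

variable {Ω : Type*} {m : ℕ} {α : ℝ} {p : Fin m → Ω → ℝ} {ω : Ω}

/-- number of p-values below the k-th threshold -/
noncomputable def bhS (m : ℕ) (α : ℝ) (p : Fin m → Ω → ℝ) (ω : Ω) (k : ℕ) : ℕ :=
  (Finset.univ.filter (fun i => p i ω ≤ ((k : ℝ) / m) * α)).card

lemma bhIndex_eq_sSup : bhIndex m α p ω = sSup {k : ℕ | k ≤ m ∧ k ≤ bhS m α p ω k} := rfl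

lemma bhSet_zero_mem : 0 ∈ {k : ℕ | k ≤ m ∧ k ≤ bhS m α p ω k} := ⟨Nat.zero_le _, Nat.zero_le _⟩

lemma bhSet_bdd : BddAbove {k : ℕ | k ≤ m ∧ k ≤ bhS m α p ω k} := ⟨m, fun _ hk => hk.1⟩

lemma bhIndex_mem : bhIndex m α p ω ∈ {k : ℕ | k ≤ m ∧ k ≤ bhS m α p ω k} :=
  Nat.sSup_mem ⟨0, bhSet_zero_mem⟩ bhSet_bdd

lemma bhIndex_le : bhIndex m α p ω ≤ m := bhIndex_mem.1

lemma bhIndex_le_bhS : bhIndex m α p ω ≤ bhS m α p ω (bhIndex m α p ω) := bhIndex_mem.2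

lemma bhS_le {k : ℕ} : bhS m α p ω k ≤ m :=
  le_trans (Finset.card_filter_le _ _) (by simp)

lemma bhS_lt_of_gt {k : ℕ} (hk : bhIndex m α p ω < k) : bhS m α p ω k < k := by
  by_contra h
  push_neg at h
  rcases le_or_gt k m with hkm | hkm
  · exact absurd (le_csSup bhSet_bdd ⟨hkm, h⟩) (not_le.2 hk)
  · exact absurd (le_trans h bhS_le) (not_le.2 hkm)

lemma bhS_mono (hα : 0 ≤ α) {k k' : ℕ} (h : k ≤ k') : bhS m α p ω k ≤ bhS m α p ω k' := by
  apply Finset.card_le_card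
  apply Finset.monotone_filter_right
  intro i _ hi
  refine le_trans hi ?_
  have hk : (k : ℝ) ≤ (k' : ℝ) := by exact_mod_cast h
  gcongr

lemma bhIndex_eq_iff {k : ℕ} :
    bhIndex m α p ω = k ↔ (k ≤ m ∧ k ≤ bhS m α p ω k) ∧ ∀ k', k < k' → bhS m α p ω k' < k' := by
  constructor
  · rintro rfl
    exact ⟨bhIndex_mem, fun k' hk' => bhS_lt_of_gt hk'⟩
  · rintro ⟨hk, hmax⟩
    have h1 : k ≤ bhIndex m α p ω := le_csSup bhSet_bdd hk
    have h2 := bhIndex_mem (m := m) (α := α) (p := p) (ω := ω)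
    rcases lt_or_ge k (bhIndex m α p ω) with h | h
    · exact absurd h2.2 (not_le.2 (hmax _ h))
    · omega

/-- size of rejection set is exactly the BH index -/
lemma card_bhRejectionSet (hα : 0 ≤ α) :
    (bhRejectionSet m α p ω).card = bhIndex m α p ω := by
  have h1 : (bhRejectionSet m α p ω).card = bhS m α p ω (bhIndex m α p ω) := rfl
  rw [h1]
  rcases lt_or_ge (bhIndex m α p ω) (bhS m α p ω (bhIndex m α p ω)) with h | h
  · exfalso
    have h2 := bhS_lt_of_gt (k := bhS m α p ω (bhIndex m α p ω)) h
    have h3 := bhS_mono (p := p) (ω := ω) hα h.le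
    omega
  · exact le_antisymm h bhIndex_le_bhS

end aux

set_option linter.unusedSectionVars false
section aux2

open MeasureTheory ProbabilityTheory

variable {Ω : Type*} [MeasurableSpace Ω] {m : ℕ} {α : ℝ} {p : Fin m → Ω → ℝ}

lemma measurable_bhS (hmeas : ∀ i, Measurable (p i)) (k : ℕ) :
    Measurable (fun ω => bhS m α p ω k) := by
  have : (fun ω => bhS m α p ω k)
      = fun ω => ∑ i : Fin m, if p i ω ≤ ((k : ℝ) / m) * α then 1 else 0 := by
    funext ω
    rw [bhS, Finset.card_filter]
  rw [this]
  apply Finset.measurable_sum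
  intro i _
  exact Measurable.ite ((hmeas i) measurableSet_Iic) measurable_const measurable_const

lemma measurableSet_bhIndex_eq (hmeas : ∀ i, Measurable (p i)) (k : ℕ) :
    MeasurableSet {ω | bhIndex m α p ω = k} := by
  have : {ω | bhIndex m α p ω = k}
      = ({ω | k ≤ m ∧ k ≤ bhS m α p ω k} ∩
        ⋂ k' ∈ Finset.Ioc k (m+1), {ω | bhS m α p ω k' < k'}) := by
    ext ω
    simp only [Set.mem_setOf_eq, Set.mem_inter_iff, Set.mem_iInter, Finset.mem_Ioc]
    rw [bhIndex_eq_iff]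
    constructor
    · rintro ⟨h1, h2⟩
      exact ⟨h1, fun k' hk' => h2 k' hk'.1⟩
    · rintro ⟨h1, h2⟩
      refine ⟨h1, fun k' hk' => ?_⟩
      rcases le_or_gt k' (m+1) with h | h
      · exact h2 k' ⟨hk', h⟩
      · exact lt_of_le_of_lt bhS_le (by omega)
  rw [this]
  apply MeasurableSet.inter
  · rcases le_or_gt k m with h | h
    · have : {ω | k ≤ m ∧ k ≤ bhS m α p ω k} = {ω | k ≤ bhS m α p ω k} := by
        ext ω; simp only [Set.mem_setOf_eq, h, true_and]
      rw [this]
      exact measurableSet_le measurable_const (measurable_bhS hmeas k)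
    · have : {ω : Ω | k ≤ m ∧ k ≤ bhS m α p ω k} = ∅ := by
        ext ω; simp; omega
      rw [this]; exact MeasurableSet.empty
  · apply MeasurableSet.biInter (Set.to_countable _)
    intro k' _
    exact measurableSet_lt (measurable_bhS hmeas k') measurable_const

/-- leave-one-out : if two p-value families have the same counts above level k,
and one has BH index k, so does the other. -/
lemma bhIndex_eq_of_bhS_eq {p' : Fin m → Ω → ℝ} {ω ω' : Ω} {k : ℕ}
    (hS : ∀ k', k ≤ k' → bhS m α p ω k' = bhS m α p' ω' k')
    (h : bhIndex m α p ω = k) : bhIndex m α p' ω' = k := by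
  rw [bhIndex_eq_iff] at h ⊢
  obtain ⟨⟨h1, h2⟩, h3⟩ := h
  refine ⟨⟨h1, by rw [← hS k le_rfl]; exact h2⟩, fun k' hk' => ?_⟩
  rw [← hS k' hk'.le]
  exact h3 k' hk'

/-- the key leave-one-out identity for the filtered counts -/
lemma bhS_update_eq (i : Fin m) {ω : Ω} {k : ℕ}
    (hp : ∀ j, 0 ≤ p j ω) (hα : 0 ≤ α)
    (hi : p i ω ≤ ((k : ℝ) / m) * α) :
    ∀ k', k ≤ k' →
      bhS m α p ω k' = bhS m α (fun j => if j = i then (fun _ => (0:ℝ)) else p j) ω k' := by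
  intro k' hk'
  unfold bhS
  congr 1
  apply Finset.filter_congr
  intro j _
  by_cases hj : j = i
  · subst hj
    simp only [if_pos rfl]
    have hthresh : ((k : ℝ) / m) * α ≤ ((k' : ℝ) / m) * α := by
      have : (k:ℝ) ≤ (k':ℝ) := by exact_mod_cast hk'
      gcongr
    have h0 : (0:ℝ) ≤ ((k' : ℝ) / m) * α := le_trans (hp j) (le_trans hi hthresh)
    simp [le_trans hi hthresh, h0]
  · simp [hj]

end aux2

section aux3

open MeasureTheory ProbabilityTheory

variable {Ω : Type*} [MeasurableSpace Ω] {m : ℕ} {α : ℝ}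

/-- the p-value family with the i-th p-value replaced by 0 -/
noncomputable def bhDrop (p : Fin m → Ω → ℝ) (i : Fin m) : Fin m → Ω → ℝ :=
  fun j => if j = i then (fun _ => (0:ℝ)) else p j

lemma bhIndex_congr {Ω' : Type*} {q : Fin m → Ω → ℝ} {q' : Fin m → Ω' → ℝ} {ω : Ω} {ω' : Ω'}
    (h : ∀ j, q j ω = q' j ω') : bhIndex m α q ω = bhIndex m α q' ω' := by
  rw [bhIndex_eq_sSup, bhIndex_eq_sSup]
  congr 1
  ext k
  have : bhS m α q ω k = bhS m α q' ω' k := by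
    unfold bhS
    congr 1
    apply Finset.filter_congr
    intro j _
    rw [h j]
  simp only [Set.mem_setOf_eq, this]

lemma measurable_bhIndex {p : Fin m → Ω → ℝ} (hmeas : ∀ i, Measurable (p i)) :
    Measurable (bhIndex m α p) :=
  measurable_to_countable' (fun k => measurableSet_bhIndex_eq hmeas k)

lemma measurable_bhDrop {p : Fin m → Ω → ℝ} (hmeas : ∀ i, Measurable (p i)) (i j : Fin m) :
    Measurable (bhDrop p i j) := by
  unfold bhDrop
  by_cases h : j = i
  · simp only [if_pos h]; exact measurable_const
  · simp only [if_neg h]; exact hmeas j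

lemma indepFun_bhDrop (P : Measure Ω) {p : Fin m → Ω → ℝ}
    (hmeas : ∀ i, Measurable (p i))
    (hindep : iIndepFun p P) (i : Fin m) :
    IndepFun (p i) (fun ω => bhIndex m α (bhDrop p i) ω) P := by
  set T : Finset (Fin m) := {i}ᶜ with hT
  have hdisj : Disjoint ({i} : Finset (Fin m)) T := by
    simp [hT]
  have h1 := hindep.indepFun_finset {i} T hdisj hmeas
  -- the modified family living on the coordinates away from i
  set q : Fin m → (↥T → ℝ) → ℝ :=
    fun j y => if h : j = i then 0 else
      y ⟨j, Finset.mem_compl.mpr (fun hmem => h (Finset.mem_singleton.mp hmem))⟩ with hq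
  have hqmeas : ∀ j, Measurable (q j) := by
    intro j
    by_cases h : j = i
    · simp only [hq, dif_pos h]; exact measurable_const
    · simp only [hq, dif_neg h]; exact measurable_pi_apply _
  have hφ : Measurable (fun y : ↥({i} : Finset (Fin m)) → ℝ =>
      y ⟨i, Finset.mem_singleton_self i⟩) := measurable_pi_apply _
  have hψ : Measurable (bhIndex m α q) := measurable_bhIndex hqmeas
  have h2 := h1.comp hφ hψ
  have e1 : ((fun y : ↥({i} : Finset (Fin m)) → ℝ =>
      y ⟨i, Finset.mem_singleton_self i⟩) ∘ (fun a (j : ↥({i} : Finset (Fin m))) => p j a)) = p i := by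
    funext a; rfl
  have e2 : (bhIndex m α q ∘ (fun a (j : ↥T) => p j a))
      = fun ω => bhIndex m α (bhDrop p i) ω := by
    funext ω
    show bhIndex m α q (fun j : ↥T => p j ω) = _
    apply bhIndex_congr
    intro j
    by_cases h : j = i
    · simp [hq, h, bhDrop]
    · simp [hq, h, bhDrop]
  rw [e1, e2] at h2
  exact h2

lemma measure_inter_bhDrop (P : Measure Ω) {p : Fin m → Ω → ℝ}
    (hmeas : ∀ i, Measurable (p i))
    (hindep : iIndepFun p P) (i : Fin m) (c : ℝ) (k : ℕ) :
    P ({ω | p i ω ≤ c} ∩ {ω | bhIndex m α (bhDrop p i) ω = k})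
      = P {ω | p i ω ≤ c} * P {ω | bhIndex m α (bhDrop p i) ω = k} := by
  have h := (indepFun_bhDrop (α := α) P hmeas hindep i).measure_inter_preimage_eq_mul
    (s := Set.Iic c) (t := {k}) measurableSet_Iic (measurableSet_singleton k)
  simpa [Set.preimage, Set.Iic] using h

end aux3

section aux4
set_option linter.unusedSectionVars false

open MeasureTheory ProbabilityTheory

variable {Ω : Type*} [MeasurableSpace Ω] {m : ℕ} {α : ℝ} {p : Fin m → Ω → ℝ} {ω : Ω}

lemma leaveOneOut (hα : 0 ≤ α) (hp : ∀ j, 0 ≤ p j ω) {i : Fin m} {k : ℕ}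
    (hi : p i ω ≤ ((k : ℝ) / m) * α) :
    bhIndex m α p ω = k ↔ bhIndex m α (bhDrop p i) ω = k := by
  constructor
  · intro h
    exact bhIndex_eq_of_bhS_eq (fun k' hk' => bhS_update_eq i hp hα hi k' hk') h
  · intro h
    exact bhIndex_eq_of_bhS_eq (fun k' hk' => (bhS_update_eq i hp hα hi k' hk').symm) h

lemma fdp_decomp {N : Finset (Fin m)} (hα : 0 ≤ α) (hp : ∀ j, 0 ≤ p j ω) :
    ((bhRejectionSet m α p ω ∩ N).card : ℝ)
        / (max 1 (bhRejectionSet m α p ω).card : ℕ)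
    = ∑ i ∈ N, ∑ k ∈ Finset.Icc 1 m,
        (if p i ω ≤ ((k : ℝ) / m) * α ∧ bhIndex m α p ω = k then ((k : ℝ))⁻¹ else 0) := by
  have hcard := card_bhRejectionSet (p := p) (ω := ω) hα
  rcases Nat.eq_zero_or_pos (bhIndex m α p ω) with h0 | h0
  · have hR : bhRejectionSet m α p ω = ∅ := Finset.card_eq_zero.mp (by rw [hcard, h0])
    rw [hR]
    simp only [Finset.empty_inter, Finset.card_empty, Nat.cast_zero, zero_div]
    symm
    apply Finset.sum_eq_zero; intro i _
    apply Finset.sum_eq_zero; intro k hk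
    rw [if_neg]
    rintro ⟨-, hkk⟩
    rw [Finset.mem_Icc] at hk
    omega
  · have hmax : max 1 (bhRejectionSet m α p ω).card = bhIndex m α p ω := by
      rw [hcard]; omega
    rw [hmax]
    have hinner : ∀ i, (∑ k ∈ Finset.Icc 1 m,
          (if p i ω ≤ ((k : ℝ) / m) * α ∧ bhIndex m α p ω = k then ((k : ℝ))⁻¹ else 0))
        = if p i ω ≤ ((bhIndex m α p ω : ℝ) / m) * α then ((bhIndex m α p ω : ℝ))⁻¹ else 0 := by
      intro i
      rw [Finset.sum_eq_single (bhIndex m α p ω)]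
      · simp
      · intro k hk hne
        rw [if_neg]
        rintro ⟨-, h⟩
        exact hne h.symm
      · intro hmem
        exfalso
        exact hmem (Finset.mem_Icc.mpr ⟨h0, bhIndex_le⟩)
    rw [Finset.sum_congr rfl (fun i _ => hinner i)]
    have hsum : (∑ i ∈ N, if p i ω ≤ ((bhIndex m α p ω : ℝ) / m) * α
          then ((bhIndex m α p ω : ℝ))⁻¹ else 0)
        = ((N.filter (fun i => p i ω ≤ ((bhIndex m α p ω : ℝ) / m) * α)).card : ℝ)
          * ((bhIndex m α p ω : ℝ))⁻¹ := by
      rw [Finset.sum_ite, Finset.sum_const, Finset.sum_const_zero, add_zero, nsmul_eq_mul]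
    rw [hsum]
    have hRN : bhRejectionSet m α p ω ∩ N
        = N.filter (fun i => p i ω ≤ ((bhIndex m α p ω : ℝ) / m) * α) := by
      ext j
      simp [bhRejectionSet, Finset.mem_filter, Finset.mem_inter, and_comm]
    rw [hRN, div_eq_mul_inv]

end aux4

/-- the Benjamini–Hochberg procedure on independent p-values with
super-uniform nulls controls the FDR at level α|N|/m ≤ α. -/
theorem bh_fdr_control
    {Ω : Type*} [MeasurableSpace Ω] (P : Measure Ω) [IsProbabilityMeasure P]
    (m : ℕ) (hm : 0 < m) (p : Fin m → Ω → ℝ)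
    (hmeas : ∀ i, Measurable (p i))
    (hrange : ∀ i ω, p i ω ∈ Set.Icc (0 : ℝ) 1)
    (hindep : iIndepFun p P)
    (N : Finset (Fin m))
    (hnull : ∀ i ∈ N, ∀ t ∈ Set.Icc (0 : ℝ) 1,
      P {ω | p i ω ≤ t} ≤ ENNReal.ofReal t)
    (α : ℝ) (hα : α ∈ Set.Icc (0 : ℝ) 1) :
    (∫ ω, ((bhRejectionSet m α p ω ∩ N).card : ℝ)
        / (max 1 (bhRejectionSet m α p ω).card : ℕ) ∂P)
      ≤ α * N.card / m
    ∧ α * N.card / m ≤ α := by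
  obtain ⟨hα0, hα1⟩ := hα
  have hNm : (N.card : ℝ) ≤ m := by
    exact_mod_cast (Finset.card_le_univ N).trans (by simp)
  have hm' : (0:ℝ) < m := by exact_mod_cast hm
  constructor
  swap
  · rw [div_le_iff₀ hm']
    gcongr
  -- main FDR bound
  -- threshold values
  have hc0 : ∀ k : ℕ, 0 ≤ ((k : ℝ) / m) * α :=
    fun k => mul_nonneg (div_nonneg (Nat.cast_nonneg k) hm'.le) hα0
  have hc1 : ∀ k ∈ Finset.Icc 1 m, ((k : ℝ) / m) * α ≤ 1 := by
    intro k hk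
    rw [Finset.mem_Icc] at hk
    have h1 : (k : ℝ) / m ≤ 1 := by
      rw [div_le_one hm']
      exact_mod_cast hk.2
    calc ((k : ℝ) / m) * α ≤ 1 * 1 := mul_le_mul h1 hα1 hα0 zero_le_one
    _ = 1 := one_mul 1
  -- measurable events
  set A : Fin m → ℕ → Set Ω :=
    fun i k => {ω | p i ω ≤ ((k : ℝ) / m) * α} ∩ {ω | bhIndex m α (bhDrop p i) ω = k} with hA
  have hAmeas : ∀ i k, MeasurableSet (A i k) := by
    intro i k
    apply MeasurableSet.inter
    · exact (hmeas i) measurableSet_Iic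
    · exact measurableSet_bhIndex_eq (measurable_bhDrop hmeas i) k
  have hKmeas : ∀ (i : Fin m) (k : ℕ),
      MeasurableSet {ω | bhIndex m α (bhDrop p i) ω = k} :=
    fun i k => measurableSet_bhIndex_eq (measurable_bhDrop hmeas i) k
  -- step 1 : rewrite the integrand as a finite sum of indicators
  have hptwise : ∀ ω, ((bhRejectionSet m α p ω ∩ N).card : ℝ)
        / (max 1 (bhRejectionSet m α p ω).card : ℕ)
      = ∑ i ∈ N, ∑ k ∈ Finset.Icc 1 m,
          Set.indicator (A i k) (fun _ => ((k : ℝ))⁻¹) ω := by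
    intro ω
    have hp : ∀ j, 0 ≤ p j ω := fun j => (hrange j ω).1
    rw [fdp_decomp (N := N) hα0 hp]
    apply Finset.sum_congr rfl
    intro i _
    apply Finset.sum_congr rfl
    intro k _
    rw [Set.indicator_apply]
    have hmem : ω ∈ A i k ↔ (p i ω ≤ ((k : ℝ) / m) * α ∧ bhIndex m α (bhDrop p i) ω = k) := by
      simp [hA, Set.mem_inter_iff, Set.mem_setOf_eq]
    by_cases hle : p i ω ≤ ((k : ℝ) / m) * α
    · have hiff : (p i ω ≤ ((k : ℝ) / m) * α ∧ bhIndex m α p ω = k) ↔ ω ∈ A i k := by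
        rw [hmem]
        exact and_congr Iff.rfl (leaveOneOut hα0 hp hle)
      exact if_congr hiff rfl rfl
    · rw [if_neg (fun h => hle h.1), if_neg (fun h => hle (hmem.mp h).1)]
  have hint : (∫ ω, ((bhRejectionSet m α p ω ∩ N).card : ℝ)
        / (max 1 (bhRejectionSet m α p ω).card : ℕ) ∂P)
      = ∑ i ∈ N, ∑ k ∈ Finset.Icc 1 m, (P (A i k)).toReal * ((k : ℝ))⁻¹ := by
    rw [integral_congr_ae (Filter.Eventually.of_forall hptwise)]
    rw [integral_finset_sum]
    · apply Finset.sum_congr rfl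
      intro i _
      rw [integral_finset_sum]
      · apply Finset.sum_congr rfl
        intro k _
        rw [integral_indicator_const _ (hAmeas i k)]
        simp [mul_comm, measureReal_def]
      · intro k _
        exact (integrable_const _).indicator (hAmeas i k)
    · intro i _
      apply integrable_finset_sum
      intro k _
      exact (integrable_const _).indicator (hAmeas i k)
  rw [hint]
  -- step 2 : bound each term using independence and super-uniformity
  have hterm : ∀ i ∈ N, ∀ k ∈ Finset.Icc 1 m,
      (P (A i k)).toReal * ((k : ℝ))⁻¹
        ≤ (α / m) * (P {ω | bhIndex m α (bhDrop p i) ω = k}).toReal := by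
    intro i hiN k hk
    rw [Finset.mem_Icc] at hk
    have hkpos : (0:ℝ) < k := by exact_mod_cast hk.1
    have hPA : P (A i k) = P {ω | p i ω ≤ ((k : ℝ) / m) * α}
        * P {ω | bhIndex m α (bhDrop p i) ω = k} :=
      measure_inter_bhDrop P hmeas hindep i (((k : ℝ) / m) * α) k
    have hPp : P {ω | p i ω ≤ ((k : ℝ) / m) * α} ≤ ENNReal.ofReal (((k : ℝ) / m) * α) :=
      hnull i hiN (((k : ℝ) / m) * α) ⟨hc0 k, hc1 k (Finset.mem_Icc.mpr hk)⟩
    have hfin : ENNReal.ofReal (((k : ℝ) / m) * α)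
        * P {ω | bhIndex m α (bhDrop p i) ω = k} ≠ ⊤ :=
      ENNReal.mul_ne_top ENNReal.ofReal_ne_top (measure_ne_top P _)
    have h1 : (P (A i k)).toReal
        ≤ (((k : ℝ) / m) * α) * (P {ω | bhIndex m α (bhDrop p i) ω = k}).toReal := by
      have h2 : (P (A i k)).toReal
          ≤ (ENNReal.ofReal (((k : ℝ) / m) * α)
              * P {ω | bhIndex m α (bhDrop p i) ω = k}).toReal := by
        apply ENNReal.toReal_mono hfin
        rw [hPA]
        exact mul_le_mul_left hPp _
      rwa [ENNReal.toReal_mul, ENNReal.toReal_ofReal (hc0 k)] at h2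
    calc (P (A i k)).toReal * ((k : ℝ))⁻¹
        ≤ ((((k : ℝ) / m) * α)
            * (P {ω | bhIndex m α (bhDrop p i) ω = k}).toReal) * ((k : ℝ))⁻¹ := by
          apply mul_le_mul_of_nonneg_right h1 (by positivity)
      _ = ((((k : ℝ) / m) * α) * ((k : ℝ))⁻¹)
            * (P {ω | bhIndex m α (bhDrop p i) ω = k}).toReal := by ring
      _ = (α / m) * (P {ω | bhIndex m α (bhDrop p i) ω = k}).toReal := by
          congr 1
          field_simp
  -- step 3 : sum the bounds
  have hsum1 : ∀ i : Fin m,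
      (∑ k ∈ Finset.Icc 1 m, (P {ω | bhIndex m α (bhDrop p i) ω = k}).toReal) ≤ 1 := by
    intro i
    have hdisj : Set.Pairwise ↑(Finset.Icc 1 m)
        (Function.onFun (MeasureTheory.AEDisjoint P)
          (fun k => {ω | bhIndex m α (bhDrop p i) ω = k})) := by
      intro k _ k' _ hkk'
      apply Disjoint.aedisjoint
      rw [Set.disjoint_left]
      intro ω hω hω'
      exact hkk' (hω.symm.trans hω')
    have hle := MeasureTheory.sum_measure_le_measure_univ
      (s := Finset.Icc 1 m) (μ := P)
      (fun k _ => (hKmeas i k).nullMeasurableSet) hdisj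
    rw [measure_univ] at hle
    have := ENNReal.toReal_mono (by simp) hle
    rw [ENNReal.toReal_sum (fun k _ => measure_ne_top P _)] at this
    simpa using this
  calc (∑ i ∈ N, ∑ k ∈ Finset.Icc 1 m, (P (A i k)).toReal * ((k : ℝ))⁻¹)
      ≤ ∑ i ∈ N, ∑ k ∈ Finset.Icc 1 m,
          (α / m) * (P {ω | bhIndex m α (bhDrop p i) ω = k}).toReal := by
        apply Finset.sum_le_sum
        intro i hi
        exact Finset.sum_le_sum (hterm i hi)
    _ = ∑ i ∈ N, (α / m) * ∑ k ∈ Finset.Icc 1 m,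
          (P {ω | bhIndex m α (bhDrop p i) ω = k}).toReal := by
        apply Finset.sum_congr rfl
        intro i _
        rw [Finset.mul_sum]
    _ ≤ ∑ i ∈ N, (α / m) * 1 := by
        apply Finset.sum_le_sum
        intro i _
        exact mul_le_mul_of_nonneg_left (hsum1 i) (by positivity)
    _ = N.card * (α / m) := by
        rw [Finset.sum_const, nsmul_eq_mul, mul_one]
    _ = α * N.card / m := by ring
end
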